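/- Let c be a generic linear list with piecewise linear map f, and let p and q = p + 1 be neighboring interior items with p a local minimum and q a local maximum (so c_p < c_q), such that no item u ∉ {p, q} has value in the closed interval [c_p, c_q]. Then the connected component of f^{-1}([c_p, c_q]) containing p and q contains no integer item other than p and q, and is contained in the open interval (p − 1, q + 1). -/

import Mathlib

/-- The piecewise linear map determined by the list `c` (on the domain `[1,m]`). -/
noncomputable def plMap (c : ℕ → ℝ) (x : ℝ) : ℝ :=
  c (Int.floor x).toNat +
    (x - (Int.floor x : ℝ)) * (c ((Int.floor x).toNat + 1) - c (Int.floor x).toNat)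

/-- The set of points of the domain `[1,m]` with values in `[A,B]`. -/
def levelBand (m : ℕ) (c : ℕ → ℝ) (A B : ℝ) : Set ℝ :=
  {x : ℝ | x ∈ Set.Icc (1 : ℝ) (m : ℝ) ∧ plMap c x ∈ Set.Icc A B}

/-- The sublevel set of the map at `s`, within the domain `[1,m]`. -/
def sublevel (m : ℕ) (c : ℕ → ℝ) (s : ℝ) : Set ℝ :=
  {x : ℝ | x ∈ Set.Icc (1 : ℝ) (m : ℝ) ∧ plMap c x ≤ s}

/-- The support of the frame spanned by the items `a` and `b`: the connected component
of `f⁻¹([f a, f b])` (within the domain) containing `a`. -/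
def frameSupport (m : ℕ) (c : ℕ → ℝ) (a b : ℕ) : Set ℝ :=
  connectedComponentIn (levelBand m c (c a) (c b)) (a : ℝ)

/-- `W(a,b)` is a triple-panel window of the piecewise linear map of `c`:
`a` and `b` are items with `c a < c b` lying in a common connected component `[x,y]`
of `f⁻¹([c a, c b])`, and the value at the end of the support away from the mirror
equals `c a`. -/
def IsTPW (m : ℕ) (c : ℕ → ℝ) (a b : ℕ) : Prop :=
  1 ≤ a ∧ a ≤ m ∧ 1 ≤ b ∧ b ≤ m ∧ c a < c b ∧
  (b : ℝ) ∈ frameSupport m c a b ∧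
  (if a < b then plMap c (sSup (frameSupport m c a b)) = c a
   else plMap c (sInf (frameSupport m c a b)) = c a)

/-- `i` is an interior local minimum of the list `c`. -/
def IsLocMin (m : ℕ) (c : ℕ → ℝ) (i : ℕ) : Prop :=
  1 < i ∧ i < m ∧ c i < c (i - 1) ∧ c i < c (i + 1)

/-- `i` is an interior local maximum of the list `c`. -/
def IsLocMax (m : ℕ) (c : ℕ → ℝ) (i : ℕ) : Prop :=
  1 < i ∧ i < m ∧ c (i - 1) < c i ∧ c (i + 1) < c i

/-- `i` is a critical item that is a leaf: an endpoint or an interior local minimum. -/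
def IsCritLeaf (m : ℕ) (c : ℕ → ℝ) (i : ℕ) : Prop :=
  i = 1 ∨ i = m ∨ IsLocMin m c i

/-- `i` is a critical item of the list `c`. -/
def IsCritItem (m : ℕ) (c : ℕ → ℝ) (i : ℕ) : Prop :=
  IsCritLeaf m c i ∨ IsLocMax m c i

/-!
The item values `c (p - 1)` and `c (q + 1)` lie outside `[c p, c q]`, so the points `p - 1` and
`q + 1` are missing from `f⁻¹([c p, c q])`; an interval of reals through `p` avoiding them lies in
`(p - 1, q + 1)`, whose only items are `p` and `q`. Conversely `f` runs monotonically from `c p` to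
`c q` on `[p, q]`, so this segment connects `q` to `p` inside the band.
-/

lemma connectedComponentIn_subset_Ioo {α : Type*} [LinearOrder α] [TopologicalSpace α]
    [OrderClosedTopology α] {S : Set α} {a l r : α} (hl : l ∉ S) (hr : r ∉ S)
    (hla : l < a) (har : a < r) : connectedComponentIn S a ⊆ Set.Ioo l r := by
  intro z hz
  have ha : a ∈ connectedComponentIn S a :=
    mem_connectedComponentIn (connectedComponentIn_nonempty_iff.mp ⟨z, hz⟩)
  have hconn : IsPreconnected (connectedComponentIn S a) := isPreconnected_connectedComponentIn
  constructor
  · by_contra! hzl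
    exact hl (connectedComponentIn_subset _ _ (hconn.Icc_subset hz ha ⟨hzl, hla.le⟩))
  · by_contra! hzr
    exact hr (connectedComponentIn_subset _ _ (hconn.Icc_subset ha hz ⟨har.le, hzr⟩))

lemma plMap_natCast (c : ℕ → ℝ) (n : ℕ) : plMap c n = c n := by
  simp [plMap]

lemma plMap_eq_of_mem_Icc (c : ℕ → ℝ) {n : ℕ} {x : ℝ} (hx : x ∈ Set.Icc (n : ℝ) (n + 1)) :
    plMap c x = c n + (x - n) * (c (n + 1) - c n) := by
  obtain ⟨hnx, hxn⟩ := hx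
  rcases hxn.lt_or_eq with hlt | rfl
  · have hfloor : ⌊x⌋ = (n : ℤ) := Int.floor_eq_iff.mpr ⟨mod_cast hnx, mod_cast hlt⟩
    simp [plMap, hfloor]
  · rw [← Nat.cast_add_one, plMap_natCast]
    push_cast
    ring

lemma plMap_mem_Icc_of_mem_Icc (c : ℕ → ℝ) {n : ℕ} (hc : c n ≤ c (n + 1)) {x : ℝ}
    (hx : x ∈ Set.Icc (n : ℝ) (n + 1)) : plMap c x ∈ Set.Icc (c n) (c (n + 1)) := by
  rw [plMap_eq_of_mem_Icc c hx]
  have ht₀ : 0 ≤ x - n := sub_nonneg.mpr hx.1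
  have ht₁ : x - n ≤ 1 := by linarith [hx.2]
  constructor <;> nlinarith

lemma natCast_notMem_levelBand {m : ℕ} {c : ℕ → ℝ} {A B : ℝ} {n : ℕ}
    (hn : c n ∉ Set.Icc A B) : (n : ℝ) ∉ levelBand m c A B := fun h =>
  hn (plMap_natCast c n ▸ h.2)

lemma natCast_succ_mem_frameSupport {m : ℕ} {c : ℕ → ℝ} {n : ℕ} (hn : 1 ≤ n) (hnm : n + 1 ≤ m)
    (hc : c n ≤ c (n + 1)) : ((n + 1 : ℕ) : ℝ) ∈ frameSupport m c n (n + 1) := by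
  have hseg : Set.Icc (n : ℝ) (n + 1) ⊆ levelBand m c (c n) (c (n + 1)) := fun x hx =>
    ⟨⟨le_trans (mod_cast hn) hx.1, hx.2.trans (mod_cast hnm)⟩, plMap_mem_Icc_of_mem_Icc c hc hx⟩
  apply isPreconnected_Icc.subset_connectedComponentIn _ hseg
  · push_cast
    exact Set.right_mem_Icc.mpr (by linarith)
  · exact Set.left_mem_Icc.mpr (by linarith)

theorem statement17_general (m : ℕ) (c : ℕ → ℝ)
    (p q : ℕ) (hq : q = p + 1)
    (hmin : IsLocMin m c p) (hmax : IsLocMax m c q)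
    (hcontig : ∀ u, 1 ≤ u → u ≤ m → u ≠ p → u ≠ q → c u ∉ Set.Icc (c p) (c q)) :
    (q : ℝ) ∈ frameSupport m c p q ∧
    (∀ u : ℕ, 1 ≤ u → u ≤ m → (u : ℝ) ∈ frameSupport m c p q → u = p ∨ u = q) ∧
    frameSupport m c p q ⊆ Set.Ioo ((p : ℝ) - 1) ((q : ℝ) + 1) := by
  subst hq
  obtain ⟨hp, -, -, hpq⟩ := hmin
  obtain ⟨-, hqm, -, -⟩ := hmax
  have hsupp : frameSupport m c p (p + 1) ⊆ Set.Ioo ((p : ℝ) - 1) (((p + 1 : ℕ) : ℝ) + 1) := by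
    have hleft := natCast_notMem_levelBand (m := m)
      (hcontig (p - 1) (by omega) (by omega) (by omega) (by omega))
    have hright := natCast_notMem_levelBand (m := m)
      (hcontig (p + 1 + 1) (by omega) (by omega) (by omega) (by omega))
    rw [Nat.cast_pred (by omega)] at hleft
    push_cast at hright ⊢
    exact connectedComponentIn_subset_Ioo hleft hright (by linarith) (by linarith)
  refine ⟨natCast_succ_mem_frameSupport (by omega) hqm.le hpq.le, fun u _ _ hu => ?_, hsupp⟩
  obtain ⟨hpu, hup⟩ := hsupp hu
  have hu_lower : p < u + 1 := by exact_mod_cast (by linarith : (p : ℝ) < u + 1)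
  have hu_upper : u < p + 2 := by exact_mod_cast (by push_cast at hup; linarith : (u : ℝ) < p + 2)
  omega

/-- For a contiguous neighboring local-minimum/local-maximum pair
`p`, `q = p + 1`, the connected component of `f⁻¹([c p, c q])` containing `p` also
contains `q`, contains no integer item other than `p` and `q`, and is contained in the
open interval `(p - 1, q + 1)`. -/
theorem statement17 (m : ℕ) (hm : 2 ≤ m) (c : ℕ → ℝ)
    (hgen : Set.InjOn c (Set.Icc 1 m))
    (p q : ℕ) (hq : q = p + 1)
    (hmin : IsLocMin m c p) (hmax : IsLocMax m c q)
    (hcontig : ∀ u, 1 ≤ u → u ≤ m → u ≠ p → u ≠ q → c u ∉ Set.Icc (c p) (c q)) :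
    (q : ℝ) ∈ frameSupport m c p q ∧
    (∀ u : ℕ, 1 ≤ u → u ≤ m → (u : ℝ) ∈ frameSupport m c p q → u = p ∨ u = q) ∧
    frameSupport m c p q ⊆ Set.Ioo ((p : ℝ) - 1) ((q : ℝ) + 1) :=
  statement17_general m c p q hq hmin hmax hcontig
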